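/- arXiv:2506.08733 — 2 statements merged into one kernel-verified Lean document; each statement's English description precedes it below -/
import Mathlib

section
/- There exist two disjoint subsets A, A' ⊆ ℝ, each of cardinality 𝔠, such that μ_*(A) = μ_*(A') = μ_*(ℝ \ A) = μ_*(ℝ \ A') = 0 and such that A ∪ A' is algebraically independent over ℚ. -/
/-!
Bernstein's construction with an algebraic twist. There are only `𝔠` Borel sets of positive
measure, and each contains a closed uncountable set, hence `𝔠` points. The algebraic closure
over `ℚ` of fewer than `𝔠` reals has fewer than `𝔠` elements, so listing the pairs
`(B, b)` (with `B` Borel of positive measure and `b : Bool`) in a well-order whose initial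
segments have size `< 𝔠`, one can choose by transfinite recursion a point of `B` transcendental
over all earlier choices. The points with `b = false` form `A`, those with `b = true` form `A'`:
both meet every Borel set of positive measure, so neither they nor their complements contain one.
-/

open MeasureTheory Cardinal

/-- The inner measure of `M ⊆ ℝ`: the supremum of the measures of Borel sets contained in `M`.
(The measurable sets of `ℝ` are exactly the Borel sets.) -/
noncomputable def innerMeasure (M : Set ℝ) : ENNReal :=
  ⨆ (B : Set ℝ) (_ : MeasurableSet B) (_ : B ⊆ M), volume B

open Set

universe u

section Transcendental

variable {K L : Type u} [Field K] [Field L] [Algebra K L]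

theorem mk_setOf_isAlgebraic_adjoin_lt (hK : #K < #L) (hL : ℵ₀ < #L) {S : Set L}
    (hS : #S < #L) : #{x : L | IsAlgebraic (Algebra.adjoin K S) x} < #L :=
  calc #{x : L | IsAlgebraic (Algebra.adjoin K S) x}
      ≤ max #(Algebra.adjoin K S) ℵ₀ := Algebraic.cardinalMk_le_max _ _
    _ ≤ max (max (max #K #S) ℵ₀) ℵ₀ := by gcongr; exact Algebra.cardinalMk_adjoin_le K S
    _ < #L := max_lt (max_lt (max_lt hK hS) hL) hL

theorem exists_mem_transcendental_adjoin (hK : #K < #L) (hL : ℵ₀ < #L) {S F : Set L}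
    (hS : #S < #L) (hF : #L ≤ #F) : ∃ x ∈ F, Transcendental (Algebra.adjoin K S) x := by
  by_contra! h
  have hFalg : F ⊆ {x : L | IsAlgebraic (Algebra.adjoin K S) x} := fun x hx => of_not_not (h x hx)
  exact (hF.trans (mk_le_mk_of_subset hFalg)).not_gt (mk_setOf_isAlgebraic_adjoin_lt hK hL hS)

end Transcendental

theorem algebraicIndependent_of_transcendental_adjoin_image_Iio {R A ι : Type*} [CommRing R]
    [CommRing A] [Algebra R A] [LinearOrder ι] {x : ι → A}
    (hinj : Function.Injective (algebraMap R A))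
    (hx : ∀ i, Transcendental (Algebra.adjoin R (x '' Iio i)) (x i)) :
    AlgebraicIndependent R x := by
  refine algebraicIndependent_of_finite_type fun t ht => ?_
  lift t to Finset ι using ht
  refine t.induction_on_max ?_ fun i s hlt ih => ?_
  · rw [Finset.coe_empty]
    exact algebraicIndependent_empty_type_iff.2 hinj
  rw [Finset.coe_insert]
  exact AlgebraicIndepOn.insert ih <| (hx i).of_tower_top_of_subalgebra_le <|
    Algebra.adjoin_mono <| image_mono fun j hj => hlt j hj

theorem exists_algebraicIndependent_forall_mem {K L ι : Type u} [Field K] [Field L]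
    [Algebra K L] (hK : #K < #L) (hL : ℵ₀ < #L) (hι : #ι ≤ #L) (F : ι → Set L)
    (hF : ∀ i, #L ≤ #(F i)) : ∃ x : ι → L, AlgebraicIndependent K x ∧ ∀ i, x i ∈ F i := by
  obtain ⟨_, _, hord⟩ := exists_ord_eq_type_lt ι
  have hnext (i : ι) (S : Set L) :
      ∃ y, #S < #L → y ∈ F i ∧ Transcendental (Algebra.adjoin K S) y := by
    by_cases hS : #S < #L
    · obtain ⟨y, hyF, hy⟩ := exists_mem_transcendental_adjoin hK hL hS (hF i)
      exact ⟨y, fun _ => ⟨hyF, hy⟩⟩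
    · exact ⟨0, fun h => absurd h hS⟩
  choose next hnext using hnext
  let x : ι → L := wellFounded_lt.fix fun i x' => next i (range fun j : Iio i => x' j j.2)
  have hx_eq (i : ι) : x i = next i (x '' Iio i) := by
    rw [image_eq_range]
    exact wellFounded_lt.fix_eq _ i
  -- the order type of `ι` is `(#ι).ord`, so its initial segments have fewer than `#L` elements
  have hsmall (i : ι) : #(x '' Iio i) < #L :=
    mk_image_le.trans_lt ((mk_Iio_lt i hord).trans_le hι)
  have hx (i : ι) := hx_eq i ▸ hnext i _ (hsmall i)
  exact ⟨x, algebraicIndependent_of_transcendental_adjoin_image_Iio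
    (algebraMap K L).injective fun i => (hx i).2, fun i => (hx i).1⟩

theorem MeasurableSpace.mk_setOf_measurableSet_le_continuum (α : Type u) [MeasurableSpace α]
    [MeasurableSpace.CountablyGenerated α] : #{s : Set α | MeasurableSet s} ≤ 𝔠 := by
  rw [← MeasurableSpace.generateFrom_countableGeneratingSet (α := α)]
  exact MeasurableSpace.cardinal_measurableSet_le_continuum
    ((MeasurableSpace.countable_countableGeneratingSet).le_aleph0.trans aleph0_le_continuum)

theorem MeasureTheory.continuum_le_mk_of_measure_ne_zero {α : Type u} [TopologicalSpace α]
    [PolishSpace α] [MeasurableSpace α] [BorelSpace α] {μ : Measure α} [μ.InnerRegular]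
    [NullSingletonClass μ] {B : Set α} (hB : MeasurableSet B) (hμB : μ B ≠ 0) : 𝔠 ≤ #B := by
  obtain ⟨K, hKB, hK, hμK⟩ := Measure.InnerRegular.innerRegular hB 0 (pos_iff_ne_zero.2 hμB)
  have hK_unc : ¬K.Countable := fun hc => (hc.measure_zero μ ▸ hμK).false
  obtain ⟨f, hfK, -, hf⟩ := hK.isClosed.exists_nat_bool_injection_of_not_countable hK_unc
  have hf' : Function.Injective fun c => (⟨f c, hKB (hfK (mem_range_self c))⟩ : B) :=
    fun a b h => hf (congrArg Subtype.val h)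
  simpa using lift_mk_le_lift_mk_of_injective hf'

theorem innerMeasure_eq_zero_of_forall_diff_nonempty {M : Set ℝ}
    (h : ∀ B, MeasurableSet B → volume B ≠ 0 → (B \ M).Nonempty) : innerMeasure M = 0 := by
  simp only [innerMeasure, ENNReal.iSup_eq_zero]
  intro B hB hBM
  by_contra hB0
  obtain ⟨x, hxB, hxM⟩ := h B hB hB0
  exact hxM (hBM hxB)

theorem mk_setOf_measurableSet_volume_ne_zero :
    #{B : Set ℝ | MeasurableSet B ∧ volume B ≠ 0} = 𝔠 := by
  refine le_antisymm ((mk_le_mk_of_subset fun B hB => hB.1).trans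
    (MeasurableSpace.mk_setOf_measurableSet_le_continuum ℝ)) ?_
  have hIci : Function.Injective fun t : ℝ =>
      (⟨Ici t, measurableSet_Ici, by simp⟩ : {B : Set ℝ | MeasurableSet B ∧ volume B ≠ 0}) :=
    fun a b h => Ici_inj.1 (congrArg Subtype.val h)
  exact mk_real ▸ mk_le_of_injective hIci

/-- There exist disjoint sets `A, A' ⊆ ℝ`, each of cardinality `𝔠`, with
`μ_*(A) = μ_*(A') = μ_*(ℝ \ A) = μ_*(ℝ \ A') = 0`, whose union `A ∪ A'` is algebraically
independent over `ℚ`. -/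
theorem exists_two_disjoint_nonmeasurable_algIndependent_sets :
    ∃ A A' : Set ℝ, Disjoint A A' ∧ #A = Cardinal.continuum ∧ #A' = Cardinal.continuum ∧
      innerMeasure A = 0 ∧ innerMeasure A' = 0 ∧
      innerMeasure Aᶜ = 0 ∧ innerMeasure A'ᶜ = 0 ∧
      AlgebraicIndependent ℚ ((↑) : (A ∪ A' : Set ℝ) → ℝ) := by
  set Ω := {B : Set ℝ | MeasurableSet B ∧ volume B ≠ 0}
  obtain ⟨x, hx, hxΩ⟩ := exists_algebraicIndependent_forall_mem (K := ℚ) (ι := Ω × Bool)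
    (mk_real ▸ mk_le_aleph0.trans_lt aleph0_lt_continuum) (mk_real ▸ aleph0_lt_continuum)
    (by simp [mk_setOf_measurableSet_volume_ne_zero, Ω, mk_real])
    (fun p => p.1.1) fun p => mk_real ▸ continuum_le_mk_of_measure_ne_zero p.1.2.1 p.1.2.2
  set A : Bool → Set ℝ := fun b => range fun B : Ω => x (B, b)
  have hdisj : Disjoint (A false) (A true) := by
    rw [disjoint_left]
    rintro _ ⟨B, rfl⟩ ⟨B', h⟩
    exact Bool.false_ne_true (congrArg Prod.snd (hx.injective h)).symm
  have hcard (b : Bool) : #(A b) = 𝔠 :=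
    (mk_range_eq _ (hx.injective.comp (Prod.mk_left_injective b))).trans
      mk_setOf_measurableSet_volume_ne_zero
  have hmeet (b : Bool) (B : Set ℝ) (hB : MeasurableSet B) (hB0 : volume B ≠ 0) :
      (B ∩ A b).Nonempty :=
    ⟨x (⟨B, hB, hB0⟩, b), hxΩ (⟨B, hB, hB0⟩, b), mem_range_self _⟩
  refine ⟨A false, A true, hdisj, hcard _, hcard _, ?_, ?_, ?_, ?_, ?_⟩
  · exact innerMeasure_eq_zero_of_forall_diff_nonempty fun B hB hB0 =>
      (hmeet true B hB hB0).mono fun y hy => ⟨hy.1, disjoint_right.1 hdisj hy.2⟩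
  · exact innerMeasure_eq_zero_of_forall_diff_nonempty fun B hB hB0 =>
      (hmeet false B hB hB0).mono fun y hy => ⟨hy.1, disjoint_left.1 hdisj hy.2⟩
  · exact innerMeasure_eq_zero_of_forall_diff_nonempty fun B hB hB0 =>
      sdiff_compl ▸ hmeet false B hB hB0
  · exact innerMeasure_eq_zero_of_forall_diff_nonempty fun B hB hB0 =>
      sdiff_compl ▸ hmeet true B hB hB0
  · exact hx.to_subtype_range.mono
      (union_subset (range_comp_subset_range _ _) (range_comp_subset_range _ _))
end

section
/- Let K be the fraction field of the polynomial ring over ℚ in a family of variables indexed by a set of cardinality 𝔠 (the rational function field ℚ(tᵢ | i < 𝔠)). Then there is a family of 2^𝔠 orderings on K, each making K an archimedean ordered field, which are pairwise non-isomorphic: for any two distinct orderings <₁ and <₂ in the family, there is no ring isomorphism f : K → K that is order-preserving from (K, <₁) to (K, <₂). -/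
/-!
The real field has transcendence degree `𝔠` over `ℚ`, so it contains an algebraically independent
family `x` indexed by `ι ⊕ ι`. For `S ⊆ ι`, sending the variables of `K` bijectively onto
`{x (inl i) | i ∈ S} ∪ {x (inr j) | j ∈ ι}` embeds `K` into `ℝ`, and the order of `ℝ` pulls back to
an archimedean ordering of `K`. An archimedean ordering determines the embedding into `ℝ`, so an
order-preserving automorphism between two of these orderings forces the two embeddings to have the
same image; but by algebraic independence `x (inl i)` lies in the image of the `S`-embedding
exactly when `i ∈ S`.
-/

open Cardinal

/-- A relation `r` (strict ordering) on a field `K` is a field ordering if it is a strict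
total order compatible with the field structure: addition preserves it, and products of
positive elements are positive (i.e. it makes `K` a linearly ordered field). -/
def IsFieldOrdering {K : Type*} [Field K] (r : K → K → Prop) : Prop :=
  IsStrictTotalOrder K r ∧ (∀ a b c : K, r a b → r (a + c) (b + c)) ∧
    (∀ a b : K, r 0 a → r 0 b → r 0 (a * b))

/-- An ordering `r` on a field `K` is archimedean if every element is below some natural
number. -/
def IsArchimedeanOrdering {K : Type*} [Field K] (r : K → K → Prop) : Prop :=
  ∀ x : K, ∃ n : ℕ, r x (n : K)

universe u

section OrderingsFromEmbeddings

variable {K L : Type*} [Field K] [Field L] [LinearOrder L] [IsStrictOrderedRing L]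

theorem isFieldOrdering_comap (φ : K →+* L) : IsFieldOrdering fun a b : K => φ a < φ b := by
  refine ⟨{ trichotomous := fun a b hab hba => φ.injective ?_
            irrefl := fun a => lt_irrefl (φ a)
            trans := fun _ _ _ => lt_trans }, fun a b c h => ?_, fun a b ha hb => ?_⟩
  · exact (lt_trichotomy (φ a) (φ b)).resolve_left hab |>.resolve_right hba
  · simpa only [map_add] using add_lt_add_left h (φ c)
  · simpa only [map_zero, map_mul] using mul_pos (by simpa using ha) (by simpa using hb)

theorem isArchimedeanOrdering_comap [Archimedean L] (φ : K →+* L) :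
    IsArchimedeanOrdering fun a b : K => φ a < φ b := fun a =>
  (exists_nat_gt (φ a)).imp fun n hn => show φ a < φ n by rwa [map_natCast]

/-- The image of an element is determined by the rationals below it. -/
theorem RingHom.eq_of_lt_iff_lt [Archimedean L] {φ ψ : K →+* L}
    (h : ∀ a b, φ a < φ b ↔ ψ a < ψ b) : φ = ψ := by
  have hrat (q : ℚ) (a : K) : (q : L) < φ a ↔ (q : L) < ψ a := by
    simpa only [map_ratCast] using h q a
  ext a
  by_contra hne
  rcases lt_or_gt_of_ne hne with hlt | hlt
  · obtain ⟨q, hφq, hqψ⟩ := exists_rat_btwn hlt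
    exact hφq.not_gt ((hrat q a).mpr hqψ)
  · obtain ⟨q, hψq, hqφ⟩ := exists_rat_btwn hlt
    exact hψq.not_gt ((hrat q a).mp hqφ)

theorem RingHom.range_eq_of_lt_iff_lt [Archimedean L] {φ ψ : K →+* L} (f : K ≃+* K)
    (h : ∀ a b, φ a < φ b ↔ ψ (f a) < ψ (f b)) : Set.range φ = Set.range ψ := by
  rw [RingHom.eq_of_lt_iff_lt (φ := φ) (ψ := ψ.comp f) h, RingHom.coe_comp]
  exact f.surjective.range_comp ψ

end OrderingsFromEmbeddings

section AlgebraicIndependence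

variable {ι κ F E : Type*} [Field F] [Field E] [Algebra F E]

open scoped IntermediateField.algebraAdjoinAdjoin in
theorem AlgebraicIndependent.mem_adjoin_image_iff {x : κ → E} (hx : AlgebraicIndependent F x)
    {s : Set κ} {k : κ} : x k ∈ IntermediateField.adjoin F (x '' s) ↔ k ∈ s := by
  refine ⟨fun hk => by_contra fun hks => ?_,
    fun hk => IntermediateField.subset_adjoin F _ ⟨k, hk, rfl⟩⟩
  have htr := IntermediateField.transcendental_adjoin_iff.mpr (hx.transcendental_adjoin hks)
  exact htr (isAlgebraic_algebraMap (⟨x k, hk⟩ : IntermediateField.adjoin F (x '' s)))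

theorem AlgebraicIndependent.fieldRange_liftAlgHom {x : ι → E} (hx : AlgebraicIndependent F x) :
    (IsFractionRing.liftAlgHom (K := FractionRing (MvPolynomial ι F))
      (algebraicIndependent_iff_injective_aeval.mp hx)).fieldRange =
      IntermediateField.adjoin F (Set.range x) :=
  IsFractionRing.liftAlgHom_fieldRange_eq_of_range_eq _
    (Algebra.adjoin_range_eq_range_aeval F x).symm

end AlgebraicIndependence

theorem IsTranscendenceBasis.cardinalMk_eq_of_lt {F E ι : Type u} [Field F] [Field E]
    [Algebra F E] {x : ι → E} (hx : IsTranscendenceBasis F x) (hE : #F ⊔ ℵ₀ < #E) :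
    #ι = #E := by
  have : Nonempty ι := by
    by_contra hι
    have := hx.isEmpty_iff_isAlgebraic.mp (not_nonempty_iff.mp hι)
    exact (Algebra.IsAlgebraic.cardinalMk_le_max F E).not_gt hE
  have hmax : #E = #F ⊔ ℵ₀ ⊔ #ι := by
    simpa only [lift_id, sup_right_comm] using hx.lift_cardinalMk_eq_max_lift
  have hlt : #F ⊔ ℵ₀ < #ι := by
    by_contra! hle
    exact (hmax.trans (sup_eq_left.mpr hle)).not_gt hE
  rw [hmax, sup_eq_right.mpr hlt.le]

theorem Real.exists_algebraicIndependent_rat {κ : Type} (hκ : #κ ≤ 𝔠) :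
    ∃ x : κ → ℝ, AlgebraicIndependent ℚ x := by
  obtain ⟨s, hs⟩ := exists_isTranscendenceBasis ℚ ℝ
  have hQR : #ℚ ⊔ ℵ₀ < #ℝ := by
    rw [Cardinal.mkRat, sup_idem, mk_real]
    exact aleph0_lt_continuum
  have hs_card : #s = 𝔠 := (hs.cardinalMk_eq_of_lt hQR).trans mk_real
  obtain ⟨e⟩ := (le_def _ _).mp (hκ.trans hs_card.ge)
  exact ⟨Subtype.val ∘ e, hs.1.comp e e.injective⟩

theorem exists_injective_sum_inl_mem_range_iff {ι : Type*} (hι : ℵ₀ ≤ #ι) (S : Set ι) :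
    ∃ m : ι → ι ⊕ ι, Function.Injective m ∧ ∀ i, Sum.inl i ∈ Set.range m ↔ i ∈ S := by
  obtain ⟨e⟩ : Nonempty (ι ≃ S ⊕ ι) := Cardinal.eq.mp <| by
    rw [mk_sum, lift_id, lift_id,
      add_eq_right hι (mk_set_le S)]
  refine ⟨Sum.map (↑) id ∘ e,
    (Subtype.val_injective.sumMap Function.injective_id).comp e.injective, fun i => ?_⟩
  rw [Set.range_comp, e.surjective.range_eq, Set.image_univ]
  constructor
  · rintro ⟨j | j, hj⟩
    · exact Sum.inl_injective hj ▸ j.2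
    · exact absurd hj Sum.inr_ne_inl
  · exact fun hi => ⟨Sum.inl ⟨i, hi⟩, rfl⟩

/-- Let `K = ℚ(tᵢ | i < 𝔠)` be the rational function field over `ℚ` in `𝔠` many variables,
i.e. the fraction field of the polynomial ring over `ℚ` in variables indexed by a set of
cardinality `𝔠`. Then there is a family of `2^𝔠` archimedean orderings of `K` that are
pairwise non-isomorphic: for distinct members of the family, no ring automorphism of `K` is
order-preserving from the one to the other. -/
theorem exists_two_pow_continuum_archimedean_orderings
    (ι : Type) (hι : #ι = Cardinal.continuum) :
    ∃ (J : Type) (R : J → (FractionRing (MvPolynomial ι ℚ) →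
        FractionRing (MvPolynomial ι ℚ) → Prop)),
      #J = 2 ^ Cardinal.continuum ∧
      (∀ j, IsFieldOrdering (R j) ∧ IsArchimedeanOrdering (R j)) ∧
      (∀ j j' : J, j ≠ j' →
        ¬ ∃ f : FractionRing (MvPolynomial ι ℚ) ≃+* FractionRing (MvPolynomial ι ℚ),
          ∀ a b, R j a b ↔ R j' (f a) (f b)) := by
  obtain ⟨x, hx⟩ := Real.exists_algebraicIndependent_rat (κ := ι ⊕ ι) <| by
    rw [mk_sum, lift_id, hι, add_eq_self aleph0_le_continuum]
  choose m hm_inj hm_range using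
    exists_injective_sum_inl_mem_range_iff (hι ▸ aleph0_le_continuum)
  let φ (S : Set ι) : FractionRing (MvPolynomial ι ℚ) →+* ℝ :=
    (IsFractionRing.liftAlgHom (K := FractionRing (MvPolynomial ι ℚ))
      (algebraicIndependent_iff_injective_aeval.mp (hx.comp (m S) (hm_inj S))) :)
  have hφ_range (S : Set ι) (i : ι) : x (Sum.inl i) ∈ Set.range (φ S) ↔ i ∈ S := by
    rw [← hm_range S i, ← hx.mem_adjoin_image_iff, ← Set.range_comp,
      ← (hx.comp (m S) (hm_inj S)).fieldRange_liftAlgHom]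
    rfl
  refine ⟨Set ι, fun S a b => φ S a < φ S b, by rw [mk_set, hι],
    fun S => ⟨isFieldOrdering_comap (φ S), isArchimedeanOrdering_comap (φ S)⟩, ?_⟩
  rintro S S' hSS' ⟨f, hf⟩
  have hrange := RingHom.range_eq_of_lt_iff_lt f hf
  exact hSS' (Set.ext fun i => by rw [← hφ_range, hrange, hφ_range])
end
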